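/- Asymptotic covariance between the two aggregated arms (intermediate step in the proof of Theorem 2). Assume α_k := P(H = k) > 0 and e_k(a) := P(A = a | H = k) > 0 for every k and both arms a ∈ {0,1}, and set ψ(a) := Σ_{k=1}^K α_k ψ_k(a). Then, with pooling weights ψ̂_n(a) := Σ_{k=1}^K (n_k/n) ψ̂_{k,n}(a), one has n · Cov(ψ̂_n(1), ψ̂_n(0)) → Σ_{k=1}^K α_k ψ_k(1) ψ_k(0) − ψ(1) ψ(0) as n → ∞; that is, the asymptotic covariance equals the covariance of the pair (ψ_H(1), ψ_H(0)) induced by the random study label H. -/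

import Mathlib

/-!
Statement 6: Asymptotic covariance between the two aggregated arms
(intermediate step in the proof of Theorem 2).
-/

open MeasureTheory ProbabilityTheory Filter Topology

namespace CausalMeta

variable {Ω : Type*}

/-- Count `#{i < n : (H_i, A_i, Y_i)(ω) = (k, a, y)}`, i.e. `n_k(a, y)`. -/
def cnt {K : ℕ} (data : ℕ → Ω → Fin K × Fin 2 × Bool)
    (n : ℕ) (k : Fin K) (a : Fin 2) (y : Bool) (ω : Ω) : ℕ :=
  ((Finset.range n).filter fun i => data i ω = (k, a, y)).card

/-- `n_k(a) = n_k(a,1) + n_k(a,0)`. -/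
def cntArm {K : ℕ} (data : ℕ → Ω → Fin K × Fin 2 × Bool)
    (n : ℕ) (k : Fin K) (a : Fin 2) (ω : Ω) : ℕ :=
  cnt data n k a true ω + cnt data n k a false ω

/-- `n_k = n_k(0) + n_k(1)`. -/
def cntStudy {K : ℕ} (data : ℕ → Ω → Fin K × Fin 2 × Bool)
    (n : ℕ) (k : Fin K) (ω : Ω) : ℕ :=
  cntArm data n k 0 ω + cntArm data n k 1 ω

/-- Per-study arm estimator `ψ̂_{k,n}(a) = n_k(a,1) / n_k(a)`. -/
noncomputable def psiHat {K : ℕ} (data : ℕ → Ω → Fin K × Fin 2 × Bool)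
    (n : ℕ) (k : Fin K) (a : Fin 2) (ω : Ω) : ℝ :=
  (cnt data n k a true ω : ℝ) / (cntArm data n k a ω : ℝ)

/-- Aggregated arm estimator with pooling weights: `ψ̂_n(a) = Σ_k (n_k/n) ψ̂_{k,n}(a)`. -/
noncomputable def psiBar {K : ℕ} (data : ℕ → Ω → Fin K × Fin 2 × Bool)
    (n : ℕ) (a : Fin 2) (ω : Ω) : ℝ :=
  ∑ k, ((cntStudy data n k ω : ℝ) / (n : ℝ)) * psiHat data n k a ω

variable [MeasurableSpace Ω]

/-- `α_k = P(H = k)`. -/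
noncomputable def alpha {K : ℕ} (P : Measure Ω) (H : Ω → Fin K) (k : Fin K) : ℝ :=
  (P {ω | H ω = k}).toReal

/-- `e_k(a) = P(A = a | H = k)`. -/
noncomputable def propens {K : ℕ} (P : Measure Ω) (H : Ω → Fin K) (A : Ω → Fin 2)
    (k : Fin K) (a : Fin 2) : ℝ :=
  (P {ω | H ω = k ∧ A ω = a}).toReal / (P {ω | H ω = k}).toReal

/-- `ψ_k(a) = E[Y(a) | H = k]` for the binary potential outcome `Y(a)`. -/
noncomputable def psi {K : ℕ} (P : Measure Ω) (H : Ω → Fin K) (Ypot : Fin 2 → Ω → Bool)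
    (k : Fin K) (a : Fin 2) : ℝ :=
  (P {ω | H ω = k ∧ Ypot a ω = true}).toReal / (P {ω | H ω = k}).toReal

/-- `ψ(a) = Σ_k α_k ψ_k(a)`. -/
noncomputable def psiPop {K : ℕ} (P : Measure Ω) (H : Ω → Fin K) (Ypot : Fin 2 → Ω → Bool)
    (a : Fin 2) : ℝ :=
  ∑ k, alpha P H k * psi P H Ypot k a

/-- `σ²(a) = Σ_k (α_k/e_k(a)) ψ_k(a)(1 − ψ_k(a)) + Σ_k α_k ψ_k(a)² − ψ(a)²`. -/
noncomputable def sigmaSqArm {K : ℕ} (P : Measure Ω) (H : Ω → Fin K) (A : Ω → Fin 2)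
    (Ypot : Fin 2 → Ω → Bool) (a : Fin 2) : ℝ :=
  ∑ k, (alpha P H k / propens P H A k a) * psi P H Ypot k a * (1 - psi P H Ypot k a)
    + ∑ k, alpha P H k * (psi P H Ypot k a) ^ 2 - (psiPop P H Ypot a) ^ 2

/-- `γ = Σ_k α_k ψ_k(1) ψ_k(0) − ψ(1) ψ(0)`. -/
noncomputable def gammaCov {K : ℕ} (P : Measure Ω) (H : Ω → Fin K)
    (Ypot : Fin 2 → Ω → Bool) : ℝ :=
  ∑ k, alpha P H k * psi P H Ypot k 1 * psi P H Ypot k 0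
    - psiPop P H Ypot 1 * psiPop P H Ypot 0

/-- The RCT assumption `A ⫫ (Y(0), Y(1)) | H`, expressed through the product
formula for the (discrete) variables `A`, `(Y(0), Y(1))` conditionally on each `{H = k}`. -/
def CondIndepGivenStudy {K : ℕ} (P : Measure Ω) (H : Ω → Fin K) (A : Ω → Fin 2)
    (Ypot : Fin 2 → Ω → Bool) : Prop :=
  ∀ (k : Fin K) (a : Fin 2) (y0 y1 : Bool),
    P {ω | H ω = k ∧ A ω = a ∧ Ypot 0 ω = y0 ∧ Ypot 1 ω = y1} * P {ω | H ω = k}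
      = P {ω | H ω = k ∧ A ω = a} * P {ω | H ω = k ∧ Ypot 0 ω = y0 ∧ Ypot 1 ω = y1}

/-- The data `(H_i, A_i, Y_i)_{i ≥ 0}` are i.i.d. copies of `(H, A, Y(A))` (SUTVA: the
observed outcome is `Y = Y(A)`). -/
def IIDSample {K : ℕ} (P : Measure Ω) (H : Ω → Fin K) (A : Ω → Fin 2)
    (Ypot : Fin 2 → Ω → Bool) (data : ℕ → Ω → Fin K × Fin 2 × Bool) : Prop :=
  iIndepFun data P ∧
    ∀ i, P.map (data i) = P.map (fun ω => (H ω, A ω, Ypot (A ω) ω))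

set_option maxHeartbeats 1000000
set_option linter.unusedSectionVars false
set_option linter.unusedVariables false

open Finset

section Core
variable {τ : Type*} [Fintype τ] [DecidableEq τ] {n : ℕ}

lemma sum_pi_prod (h : Fin n → τ → ℝ) :
    ∑ v : Fin n → τ, ∏ i, h i (v i) = ∏ i, ∑ t, h i t :=
  (Fintype.prod_sum h).symm

lemma exp_single (w : Fin n → τ → ℝ) (hw : ∀ i, ∑ t, w i t = 1) (f : τ → ℝ) (i : Fin n) :
    ∑ v : Fin n → τ, (∏ i', w i' (v i')) * f (v i) = ∑ t, w i t * f t := by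
  have key : ∀ v : Fin n → τ, (∏ i', w i' (v i')) * f (v i)
      = ∏ i', (w i' (v i') * if i' = i then f (v i') else 1) := by
    intro v
    rw [Finset.prod_mul_distrib]
    congr 1
    simp [Finset.prod_ite_eq']
  calc ∑ v : Fin n → τ, (∏ i', w i' (v i')) * f (v i)
      = ∑ v : Fin n → τ, ∏ i', (w i' (v i') * if i' = i then f (v i') else 1) := by
        exact Finset.sum_congr rfl fun v _ => key v
    _ = ∏ i', ∑ t, (w i' t * if i' = i then f t else 1) :=
        sum_pi_prod (fun i' t => w i' t * if i' = i then f t else 1)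
    _ = ∑ t, w i t * f t := by
        rw [Fintype.prod_eq_single i]
        · simp
        · intro x hx
          simp [hx, hw x]

lemma exp_pair (w : Fin n → τ → ℝ) (hw : ∀ i, ∑ t, w i t = 1) (f g : τ → ℝ)
    (i j : Fin n) (hij : i ≠ j) :
    ∑ v : Fin n → τ, (∏ i', w i' (v i')) * f (v i) * g (v j)
      = (∑ t, w i t * f t) * (∑ t, w j t * g t) := by
  have key : ∀ v : Fin n → τ, (∏ i', w i' (v i')) * f (v i) * g (v j)
      = ∏ i', (w i' (v i') * ((if i' = i then f (v i') else 1)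
          * if i' = j then g (v i') else 1)) := by
    intro v
    rw [Finset.prod_mul_distrib, Finset.prod_mul_distrib]
    simp [Finset.prod_ite_eq', mul_assoc]
  calc ∑ v : Fin n → τ, (∏ i', w i' (v i')) * f (v i) * g (v j)
      = ∑ v : Fin n → τ, ∏ i', (w i' (v i') * ((if i' = i then f (v i') else 1)
          * if i' = j then g (v i') else 1)) := Finset.sum_congr rfl fun v _ => key v
    _ = ∏ i', ∑ t, (w i' t * ((if i' = i then f t else 1) * if i' = j then g t else 1)) :=
        sum_pi_prod (fun i' t => w i' t * ((if i' = i then f t else 1) * if i' = j then g t else 1))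
    _ = (∑ t, w i t * f t) * (∑ t, w j t * g t) := by
        rw [Fintype.prod_eq_mul i j hij]
        · congr 1
          · simp [hij]
          · simp [hij.symm]
        · intro x hx
          simp [hx.1, hx.2, hw x]

lemma exp_prod (w : Fin n → τ → ℝ) (χ : τ → ℝ) :
    ∑ v : Fin n → τ, (∏ i', w i' (v i')) * (∏ i', χ (v i'))
      = ∏ i', ∑ t, w i' t * χ t := by
  calc ∑ v : Fin n → τ, (∏ i', w i' (v i')) * (∏ i', χ (v i'))
      = ∑ v : Fin n → τ, ∏ i', (w i' (v i') * χ (v i')) := by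
        exact Finset.sum_congr rfl fun v _ => (Finset.prod_mul_distrib).symm
    _ = ∏ i', ∑ t, w i' t * χ t := sum_pi_prod (fun i' t => w i' t * χ t)

/-- number of coordinates equal to `t0` -/
def Mcnt (c : Fin n → τ) (t0 : τ) : ℕ := (univ.filter fun i => c i = t0).card

lemma Mcnt_cast (c : Fin n → τ) (t0 : τ) :
    ((Mcnt c t0 : ℝ)) = ∑ i, (if c i = t0 then (1:ℝ) else 0) := by
  rw [Mcnt, Finset.card_filter]
  push_cast
  rfl

lemma Mcnt_le (c : Fin n → τ) (t0 : τ) : Mcnt c t0 ≤ n := by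
  have := Finset.card_filter_le (Finset.univ : Finset (Fin n)) (fun i => c i = t0)
  simpa [Mcnt] using this

variable (w : τ → ℝ)

lemma exp_sum (hw : ∑ t, w t = 1) (f : τ → ℝ) :
    ∑ c : Fin n → τ, (∏ i, w (c i)) * (∑ i, f (c i)) = n * ∑ t, w t * f t := by
  calc ∑ c : Fin n → τ, (∏ i, w (c i)) * (∑ i, f (c i))
      = ∑ c : Fin n → τ, ∑ i, (∏ i', w (c i')) * f (c i) := by
        exact Finset.sum_congr rfl fun c _ => Finset.mul_sum _ _ _
    _ = ∑ i : Fin n, ∑ c : Fin n → τ, (∏ i', w (c i')) * f (c i) := Finset.sum_comm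
    _ = ∑ _i : Fin n, ∑ t, w t * f t := by
        exact Finset.sum_congr rfl fun i _ =>
          exp_single (fun _ => w) (fun _ => hw) f i
    _ = n * ∑ t, w t * f t := by simp [mul_comm]

lemma exp_sum_mul_sum (hw : ∑ t, w t = 1) (f g : τ → ℝ) :
    ∑ c : Fin n → τ, (∏ i, w (c i)) * ((∑ i, f (c i)) * (∑ i, g (c i)))
      = n * (∑ t, w t * (f t * g t))
        + ((n:ℝ)^2 - n) * ((∑ t, w t * f t) * (∑ t, w t * g t)) := by
  have expand : ∀ c : Fin n → τ, (∏ i, w (c i)) * ((∑ i, f (c i)) * (∑ i, g (c i)))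
      = ∑ i : Fin n, ∑ j : Fin n, (∏ i', w (c i')) * f (c i) * g (c j) := by
    intro c
    rw [Finset.sum_mul_sum, Finset.mul_sum]
    refine Finset.sum_congr rfl fun i _ => ?_
    rw [Finset.mul_sum]
    refine Finset.sum_congr rfl fun j _ => ?_
    ring
  rw [Finset.sum_congr rfl fun c _ => expand c]
  rw [Finset.sum_comm]
  have inner : ∀ i : Fin n, ∑ c : Fin n → τ, ∑ j : Fin n,
        (∏ i', w (c i')) * f (c i) * g (c j)
      = ∑ j : Fin n, (if i = j then ∑ t, w t * (f t * g t)
          else (∑ t, w t * f t) * (∑ t, w t * g t)) := by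
    intro i
    rw [Finset.sum_comm]
    refine Finset.sum_congr rfl fun j _ => ?_
    by_cases hij : i = j
    · subst hij
      simp only [if_pos rfl]
      have := exp_single (fun _ : Fin n => w) (fun _ => hw) (fun t => f t * g t) i
      rw [← this]
      exact Finset.sum_congr rfl fun c _ => by ring
    · rw [if_neg hij]
      exact exp_pair (fun _ => w) (fun _ => hw) f g i j hij
  rw [Finset.sum_congr rfl fun i _ => inner i]
  have : ∀ i : Fin n, ∑ j : Fin n, (if i = j then ∑ t, w t * (f t * g t)
          else (∑ t, w t * f t) * (∑ t, w t * g t))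
      = (n:ℝ) * ((∑ t, w t * f t) * (∑ t, w t * g t))
        + (∑ t, w t * (f t * g t) - (∑ t, w t * f t) * (∑ t, w t * g t)) := by
    intro i
    have : ∀ j : Fin n, (if i = j then ∑ t, w t * (f t * g t)
          else (∑ t, w t * f t) * (∑ t, w t * g t))
        = (∑ t, w t * f t) * (∑ t, w t * g t)
          + (if i = j then (∑ t, w t * (f t * g t)
              - (∑ t, w t * f t) * (∑ t, w t * g t)) else 0) := by
      intro j; by_cases h : i = j <;> simp [h]
    rw [Finset.sum_congr rfl fun j _ => this j, Finset.sum_add_distrib]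
    simp [Finset.sum_ite_eq]
  rw [Finset.sum_congr rfl fun i _ => this i]
  simp only [Finset.sum_add_distrib, Finset.sum_const, Finset.card_univ, Fintype.card_fin,
    nsmul_eq_mul]
  ring

lemma exp_indic_zero (t0 : τ) :
    ∑ c : Fin n → τ, (∏ i, w (c i)) * (if Mcnt c t0 = 0 then (1:ℝ) else 0)
      = (∑ t, w t - w t0)^n := by
  have key : ∀ c : Fin n → τ, (if Mcnt c t0 = 0 then (1:ℝ) else 0)
      = ∏ i, (if c i = t0 then (0:ℝ) else 1) := by
    intro c
    by_cases h : ∀ i, c i ≠ t0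
    · have hM : Mcnt c t0 = 0 := by
        simp [Mcnt, Finset.filter_eq_empty_iff.2 (fun i _ => h i)]
      rw [if_pos hM]
      rw [Finset.prod_eq_one]
      intro i _; rw [if_neg (h i)]
    · push_neg at h
      obtain ⟨i, hi⟩ := h
      have hM : Mcnt c t0 ≠ 0 := by
        simp only [Mcnt, ← Finset.card_pos, Finset.card_pos]
        exact Finset.card_ne_zero_of_mem (Finset.mem_filter.2 ⟨Finset.mem_univ i, hi⟩)
      rw [if_neg hM]
      exact (Finset.prod_eq_zero (Finset.mem_univ i) (by rw [if_pos hi])).symm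
  rw [Finset.sum_congr rfl fun c _ => by rw [key c]]
  rw [exp_prod (fun _ => w) (fun t => if t = t0 then (0:ℝ) else 1)]
  have : ∑ t, w t * (if t = t0 then (0:ℝ) else 1) = ∑ t, w t - w t0 := by
    have : ∀ t, w t * (if t = t0 then (0:ℝ) else 1)
        = w t - (if t = t0 then w t else 0) := by
      intro t; by_cases h : t = t0 <;> simp [h]
    rw [Finset.sum_congr rfl fun t _ => this t, Finset.sum_sub_distrib]
    simp [Finset.sum_ite_eq']
  rw [Finset.prod_congr rfl fun i _ => this]
  simp

end Core

section Cell
variable {γ : Type*} [Fintype γ] [DecidableEq γ] {n : ℕ}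

/-- successes in cell `d`: coordinates with category `d` and outcome `true` -/
def Scnt (c : Fin n → γ) (d : γ) (y : Fin n → Bool) : ℕ :=
  (univ.filter fun i => c i = d ∧ y i = true).card

lemma Scnt_cast (c : Fin n → γ) (d : γ) (y : Fin n → Bool) :
    ((Scnt c d y : ℝ)) = ∑ i ∈ univ.filter (fun i => c i = d),
      (if y i = true then (1:ℝ) else 0) := by
  rw [Scnt, ← Finset.filter_filter, Finset.card_filter]
  push_cast
  rfl

/-- the Bernoulli indicator `fun t : Bool => if t then 1 else 0` has
expectation `b true` under any weight summing to one -/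
lemma bool_exp (b : Bool → ℝ) :
    ∑ t : Bool, b t * (if t = true then (1:ℝ) else 0) = b true := by
  simp

lemma cell_single (b : γ → Bool → ℝ) (hb : ∀ d, b d true + b d false = 1)
    (c : Fin n → γ) (d : γ) :
    ∑ y : Fin n → Bool, (∏ i, b (c i) (y i)) * ((Scnt c d y : ℝ) / (Mcnt c d : ℝ))
      = b d true * (if Mcnt c d = 0 then (0:ℝ) else 1) := by
  have hw : ∀ i : Fin n, ∑ t : Bool, b (c i) t = 1 := by
    intro i; rw [Fintype.sum_bool]; exact hb (c i)
  have key : ∑ y : Fin n → Bool, (∏ i, b (c i) (y i)) * (Scnt c d y : ℝ)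
      = (Mcnt c d : ℝ) * b d true := by
    calc ∑ y : Fin n → Bool, (∏ i, b (c i) (y i)) * (Scnt c d y : ℝ)
        = ∑ y : Fin n → Bool, ∑ i ∈ univ.filter (fun i => c i = d),
            (∏ i', b (c i') (y i')) * (if y i = true then (1:ℝ) else 0) := by
          refine Finset.sum_congr rfl fun y _ => ?_
          rw [Scnt_cast, Finset.mul_sum]
      _ = ∑ i ∈ univ.filter (fun i => c i = d), ∑ y : Fin n → Bool,
            (∏ i', b (c i') (y i')) * (if y i = true then (1:ℝ) else 0) := Finset.sum_comm
      _ = ∑ i ∈ univ.filter (fun i => c i = d), b d true := by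
          refine Finset.sum_congr rfl fun i hi => ?_
          have hci : c i = d := (Finset.mem_filter.1 hi).2
          rw [exp_single (fun i' => b (c i')) hw (fun t => if t = true then (1:ℝ) else 0) i]
          rw [bool_exp, hci]
      _ = (Mcnt c d : ℝ) * b d true := by
          rw [Finset.sum_const, Mcnt]
          simp [nsmul_eq_mul]
  have pull : ∑ y : Fin n → Bool, (∏ i, b (c i) (y i)) * ((Scnt c d y : ℝ) / (Mcnt c d : ℝ))
      = (∑ y : Fin n → Bool, (∏ i, b (c i) (y i)) * (Scnt c d y : ℝ)) * (Mcnt c d : ℝ)⁻¹ := by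
    rw [Finset.sum_mul]
    refine Finset.sum_congr rfl fun y _ => ?_
    rw [div_eq_mul_inv]; ring
  rw [pull, key]
  by_cases hM : Mcnt c d = 0
  · simp [hM]
  · have : (Mcnt c d : ℝ) ≠ 0 := Nat.cast_ne_zero.2 hM
    rw [if_neg hM]
    field_simp

lemma cell_pair (b : γ → Bool → ℝ) (hb : ∀ d, b d true + b d false = 1)
    (c : Fin n → γ) (d1 d0 : γ) (hd : d1 ≠ d0) :
    ∑ y : Fin n → Bool, (∏ i, b (c i) (y i))
        * ((Scnt c d1 y : ℝ) / (Mcnt c d1 : ℝ)) * ((Scnt c d0 y : ℝ) / (Mcnt c d0 : ℝ))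
      = (b d1 true * (if Mcnt c d1 = 0 then (0:ℝ) else 1))
        * (b d0 true * (if Mcnt c d0 = 0 then (0:ℝ) else 1)) := by
  have hw : ∀ i : Fin n, ∑ t : Bool, b (c i) t = 1 := by
    intro i; rw [Fintype.sum_bool]; exact hb (c i)
  have key : ∑ y : Fin n → Bool, (∏ i, b (c i) (y i)) * (Scnt c d1 y : ℝ) * (Scnt c d0 y : ℝ)
      = (Mcnt c d1 : ℝ) * (Mcnt c d0 : ℝ) * (b d1 true * b d0 true) := by
    calc ∑ y : Fin n → Bool, (∏ i, b (c i) (y i)) * (Scnt c d1 y : ℝ) * (Scnt c d0 y : ℝ)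
        = ∑ y : Fin n → Bool, ∑ i ∈ univ.filter (fun i => c i = d1),
            ∑ j ∈ univ.filter (fun j => c j = d0),
            (∏ i', b (c i') (y i')) * (if y i = true then (1:ℝ) else 0)
              * (if y j = true then (1:ℝ) else 0) := by
          refine Finset.sum_congr rfl fun y _ => ?_
          rw [Scnt_cast, Scnt_cast, mul_assoc, Finset.sum_mul_sum, Finset.mul_sum]
          refine Finset.sum_congr rfl fun i _ => ?_
          rw [Finset.mul_sum]
          refine Finset.sum_congr rfl fun j _ => ?_
          ring
      _ = ∑ i ∈ univ.filter (fun i => c i = d1), ∑ j ∈ univ.filter (fun j => c j = d0),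
            ∑ y : Fin n → Bool,
            (∏ i', b (c i') (y i')) * (if y i = true then (1:ℝ) else 0)
              * (if y j = true then (1:ℝ) else 0) := by
          rw [Finset.sum_comm]
          refine Finset.sum_congr rfl fun i _ => Finset.sum_comm
      _ = ∑ i ∈ univ.filter (fun i => c i = d1), ∑ j ∈ univ.filter (fun j => c j = d0),
            b d1 true * b d0 true := by
          refine Finset.sum_congr rfl fun i hi => ?_
          refine Finset.sum_congr rfl fun j hj => ?_
          have hci : c i = d1 := (Finset.mem_filter.1 hi).2
          have hcj : c j = d0 := (Finset.mem_filter.1 hj).2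
          have hij : i ≠ j := fun h => hd (by rw [← hci, h, hcj])
          rw [exp_pair (fun i' => b (c i')) hw
            (fun t => if t = true then (1:ℝ) else 0)
            (fun t => if t = true then (1:ℝ) else 0) i j hij]
          rw [bool_exp, bool_exp, hci, hcj]
      _ = (Mcnt c d1 : ℝ) * (Mcnt c d0 : ℝ) * (b d1 true * b d0 true) := by
          rw [Finset.sum_const, Finset.sum_const, Mcnt, Mcnt]
          simp [nsmul_eq_mul]
          ring
  have pull : ∑ y : Fin n → Bool, (∏ i, b (c i) (y i))
        * ((Scnt c d1 y : ℝ) / (Mcnt c d1 : ℝ)) * ((Scnt c d0 y : ℝ) / (Mcnt c d0 : ℝ))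
      = (∑ y : Fin n → Bool, (∏ i, b (c i) (y i)) * (Scnt c d1 y : ℝ) * (Scnt c d0 y : ℝ))
          * ((Mcnt c d1 : ℝ)⁻¹ * (Mcnt c d0 : ℝ)⁻¹) := by
    rw [Finset.sum_mul]
    refine Finset.sum_congr rfl fun y _ => ?_
    rw [div_eq_mul_inv, div_eq_mul_inv]; ring
  rw [pull, key]
  by_cases hM1 : Mcnt c d1 = 0
  · simp [hM1]
  · by_cases hM0 : Mcnt c d0 = 0
    · simp [hM0]
    · have h1 : (Mcnt c d1 : ℝ) ≠ 0 := Nat.cast_ne_zero.2 hM1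
      have h0 : (Mcnt c d0 : ℝ) ≠ 0 := Nat.cast_ne_zero.2 hM0
      rw [if_neg hM1, if_neg hM0]
      field_simp
      try ring

end Cell

section Split
variable {K : ℕ}

/-- merge a category sequence and an outcome sequence into a data sequence -/
def glue {n : ℕ} (c : Fin n → Fin K × Fin 2) (y : Fin n → Bool) :
    Fin n → Fin K × Fin 2 × Bool :=
  fun i => ((c i).1, (c i).2, y i)

/-- cell weight -/
def pcat (p : Fin K × Fin 2 × Bool → ℝ) (d : Fin K × Fin 2) : ℝ :=
  p (d.1, d.2, true) + p (d.1, d.2, false)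

/-- conditional success probability in a cell -/
noncomputable def qb (p : Fin K × Fin 2 × Bool → ℝ) (d : Fin K × Fin 2) : ℝ :=
  p (d.1, d.2, true) / pcat p d

/-- Bernoulli weights in a cell -/
noncomputable def bern (p : Fin K × Fin 2 × Bool → ℝ) (d : Fin K × Fin 2) :
    Bool → ℝ := fun y => if y then qb p d else 1 - qb p d

def chi (m : ℕ) : ℝ := if m = 0 then 0 else 1

/-- study count of a category sequence -/
def Mst {n : ℕ} (c : Fin n → Fin K × Fin 2) (k : Fin K) : ℕ :=
  Mcnt c (k, 0) + Mcnt c (k, 1)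

/-- category weight of a sequence -/
def Wcat (p : Fin K × Fin 2 × Bool → ℝ) {n : ℕ} (c : Fin n → Fin K × Fin 2) : ℝ :=
  ∏ i, pcat p (c i)

noncomputable def Vq (p : Fin K × Fin 2 × Bool → ℝ) (n : ℕ) (k j : Fin K) : ℝ :=
  ∑ c : Fin n → Fin K × Fin 2, Wcat p c * ((Mst c k : ℝ)/(n:ℝ)) * ((Mst c j : ℝ)/(n:ℝ))
    * chi (Mcnt c (k,1)) * chi (Mcnt c (j,0))

noncomputable def Uq (p : Fin K × Fin 2 × Bool → ℝ) (n : ℕ) (k : Fin K) (a : Fin 2) : ℝ :=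
  ∑ c : Fin n → Fin K × Fin 2, Wcat p c * ((Mst c k : ℝ)/(n:ℝ)) * chi (Mcnt c (k,a))

/-- deterministic analogues of the estimators on sequence space -/
def cntV {n : ℕ} (v : Fin n → Fin K × Fin 2 × Bool) (k : Fin K) (a : Fin 2) (y : Bool) : ℕ :=
  Mcnt v (k, a, y)

def cntArmV {n : ℕ} (v : Fin n → Fin K × Fin 2 × Bool) (k : Fin K) (a : Fin 2) : ℕ :=
  cntV v k a true + cntV v k a false

def cntStudyV {n : ℕ} (v : Fin n → Fin K × Fin 2 × Bool) (k : Fin K) : ℕ :=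
  cntArmV v k 0 + cntArmV v k 1

noncomputable def psiHatV {n : ℕ} (v : Fin n → Fin K × Fin 2 × Bool) (k : Fin K)
    (a : Fin 2) : ℝ := (cntV v k a true : ℝ) / (cntArmV v k a : ℝ)

noncomputable def psiBarV (n : ℕ) (v : Fin n → Fin K × Fin 2 × Bool) (a : Fin 2) : ℝ :=
  ∑ k, ((cntStudyV v k : ℝ) / (n : ℝ)) * psiHatV v k a

lemma sum_split {n : ℕ} (F : (Fin n → Fin K × Fin 2 × Bool) → ℝ) :
    ∑ v, F v = ∑ c : Fin n → Fin K × Fin 2, ∑ y : Fin n → Bool, F (glue c y) := by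
  rw [← Equiv.sum_comp
    (⟨fun x => glue x.1 x.2,
      fun v => (fun i => ((v i).1, (v i).2.1), fun i => (v i).2.2),
      fun x => by ext i <;> simp [glue],
      fun v => by funext i; simp [glue]⟩ :
      ((Fin n → Fin K × Fin 2) × (Fin n → Bool)) ≃ (Fin n → Fin K × Fin 2 × Bool)) F,
    Fintype.sum_prod_type]
  rfl

section WithP
variable (p : Fin K × Fin 2 × Bool → ℝ)

lemma bern_sum (hcell : ∀ d, 0 < pcat p d) (d : Fin K × Fin 2) :
    bern p d true + bern p d false = 1 := by simp [bern]

lemma p_eq_pcat_mul_bern (hcell : ∀ d, 0 < pcat p d) (d : Fin K × Fin 2) (y : Bool) :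
    p (d.1, d.2, y) = pcat p d * bern p d y := by
  have h : pcat p d ≠ 0 := (hcell d).ne'
  cases y
  · have hb : bern p d false = 1 - qb p d := by simp [bern]
    rw [hb, qb, mul_sub, mul_one, mul_div_cancel₀ _ h, pcat]
    ring
  · have hb : bern p d true = qb p d := by simp [bern]
    rw [hb, qb, mul_div_cancel₀ _ h]

lemma weight_split (hcell : ∀ d, 0 < pcat p d) {n : ℕ} (c : Fin n → Fin K × Fin 2)
    (y : Fin n → Bool) :
    (∏ i, p (glue c y i)) = Wcat p c * ∏ i, bern p (c i) (y i) := by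
  rw [Wcat, ← Finset.prod_mul_distrib]
  refine Finset.prod_congr rfl fun i _ => ?_
  exact p_eq_pcat_mul_bern p hcell (c i) (y i)

lemma cntV_glue {n : ℕ} (c : Fin n → Fin K × Fin 2) (y : Fin n → Bool) (k : Fin K) (a : Fin 2) :
    cntV (glue c y) k a true = Scnt c (k, a) y := by
  rw [cntV, Mcnt, Scnt]
  congr 1
  ext i
  simp only [Finset.mem_filter, Finset.mem_univ, true_and, glue, Prod.ext_iff]
  tauto

lemma cntArmV_glue {n : ℕ} (c : Fin n → Fin K × Fin 2) (y : Fin n → Bool) (k : Fin K)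
    (a : Fin 2) : cntArmV (glue c y) k a = Mcnt c (k, a) := by
  rw [cntArmV, cntV, cntV, Mcnt, Mcnt, Mcnt]
  have h1 : (univ.filter fun i => glue c y i = (k, a, true))
      = (univ.filter fun i => c i = (k,a)).filter (fun i => y i = true) := by
    rw [Finset.filter_filter]
    ext i
    simp only [Finset.mem_filter, Finset.mem_univ, true_and, glue, Prod.ext_iff]
    tauto
  have h0 : (univ.filter fun i => glue c y i = (k, a, false))
      = (univ.filter fun i => c i = (k,a)).filter (fun i => ¬ (y i = true)) := by
    rw [Finset.filter_filter]
    ext i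
    simp only [Finset.mem_filter, Finset.mem_univ, true_and, glue, Prod.ext_iff,
      Bool.not_eq_true]
    tauto
  rw [h1, h0]
  exact Finset.card_filter_add_card_filter_not _

lemma cntStudyV_glue {n : ℕ} (c : Fin n → Fin K × Fin 2) (y : Fin n → Bool) (k : Fin K) :
    cntStudyV (glue c y) k = Mst c k := by
  rw [cntStudyV, cntArmV_glue, cntArmV_glue, Mst]

lemma psiHatV_glue {n : ℕ} (c : Fin n → Fin K × Fin 2) (y : Fin n → Bool) (k : Fin K)
    (a : Fin 2) :
    psiHatV (glue c y) k a = (Scnt c (k,a) y : ℝ) / (Mcnt c (k,a) : ℝ) := by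
  rw [psiHatV, cntV_glue, cntArmV_glue]

lemma intProd (hcell : ∀ d, 0 < pcat p d) (n : ℕ) :
    ∑ v : Fin n → Fin K × Fin 2 × Bool,
        (∏ i, p (v i)) * psiBarV n v 1 * psiBarV n v 0
      = ∑ k, ∑ j, qb p (k,1) * qb p (j,0) * Vq p n k j := by
  have expand : ∀ v : Fin n → Fin K × Fin 2 × Bool,
      (∏ i, p (v i)) * psiBarV n v 1 * psiBarV n v 0
      = ∑ k, ∑ j, (∏ i, p (v i)) * (((cntStudyV v k : ℝ)/(n:ℝ)) * psiHatV v k 1)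
          * (((cntStudyV v j : ℝ)/(n:ℝ)) * psiHatV v j 0) := by
    intro v
    rw [psiBarV, psiBarV, mul_assoc, Finset.sum_mul_sum, Finset.mul_sum]
    refine Finset.sum_congr rfl fun k _ => ?_
    rw [Finset.mul_sum]
    refine Finset.sum_congr rfl fun j _ => ?_
    ring
  rw [Finset.sum_congr rfl fun v _ => expand v]
  rw [Finset.sum_comm]
  refine Finset.sum_congr rfl fun k _ => ?_
  rw [Finset.sum_comm]
  refine Finset.sum_congr rfl fun j _ => ?_
  rw [sum_split]
  have inner : ∀ c : Fin n → Fin K × Fin 2,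
      ∑ y : Fin n → Bool, (∏ i, p (glue c y i))
          * (((cntStudyV (glue c y) k : ℝ)/(n:ℝ)) * psiHatV (glue c y) k 1)
          * (((cntStudyV (glue c y) j : ℝ)/(n:ℝ)) * psiHatV (glue c y) j 0)
      = Wcat p c * ((Mst c k : ℝ)/(n:ℝ)) * ((Mst c j : ℝ)/(n:ℝ))
          * (∑ y : Fin n → Bool, (∏ i, bern p (c i) (y i))
              * ((Scnt c (k,1) y : ℝ) / (Mcnt c (k,1) : ℝ))
              * ((Scnt c (j,0) y : ℝ) / (Mcnt c (j,0) : ℝ))) := by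
    intro c
    rw [Finset.mul_sum]
    refine Finset.sum_congr rfl fun y _ => ?_
    rw [weight_split p hcell, cntStudyV_glue, cntStudyV_glue, psiHatV_glue, psiHatV_glue]
    ring
  rw [Finset.sum_congr rfl fun c _ => inner c]
  have cp : ∀ c : Fin n → Fin K × Fin 2,
      (∑ y : Fin n → Bool, (∏ i, bern p (c i) (y i))
          * ((Scnt c (k,1) y : ℝ) / (Mcnt c (k,1) : ℝ))
          * ((Scnt c (j,0) y : ℝ) / (Mcnt c (j,0) : ℝ)))
      = (bern p (k,1) true * chi (Mcnt c (k,1))) * (bern p (j,0) true * chi (Mcnt c (j,0))) := by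
    intro c
    rw [cell_pair (bern p) (bern_sum p hcell) c (k,1) (j,0) (by simp)]
    rw [chi, chi]
  rw [Finset.sum_congr rfl fun c _ => by rw [cp c]]
  rw [Vq, Finset.mul_sum]
  refine Finset.sum_congr rfl fun c _ => ?_
  have : bern p (k,1) true = qb p (k,1) := by simp [bern]
  have h2 : bern p (j,0) true = qb p (j,0) := by simp [bern]
  rw [this, h2]
  ring

lemma intSingle (hcell : ∀ d, 0 < pcat p d) (n : ℕ) (a : Fin 2) :
    ∑ v : Fin n → Fin K × Fin 2 × Bool, (∏ i, p (v i)) * psiBarV n v a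
      = ∑ k, qb p (k,a) * Uq p n k a := by
  have expand : ∀ v : Fin n → Fin K × Fin 2 × Bool,
      (∏ i, p (v i)) * psiBarV n v a
      = ∑ k, (∏ i, p (v i)) * (((cntStudyV v k : ℝ)/(n:ℝ)) * psiHatV v k a) := by
    intro v
    rw [psiBarV, Finset.mul_sum]
  rw [Finset.sum_congr rfl fun v _ => expand v]
  rw [Finset.sum_comm]
  refine Finset.sum_congr rfl fun k _ => ?_
  rw [sum_split]
  have inner : ∀ c : Fin n → Fin K × Fin 2,
      ∑ y : Fin n → Bool, (∏ i, p (glue c y i))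
          * (((cntStudyV (glue c y) k : ℝ)/(n:ℝ)) * psiHatV (glue c y) k a)
      = Wcat p c * ((Mst c k : ℝ)/(n:ℝ))
          * (∑ y : Fin n → Bool, (∏ i, bern p (c i) (y i))
              * ((Scnt c (k,a) y : ℝ) / (Mcnt c (k,a) : ℝ))) := by
    intro c
    rw [Finset.mul_sum]
    refine Finset.sum_congr rfl fun y _ => ?_
    rw [weight_split p hcell, cntStudyV_glue, psiHatV_glue]
    ring
  rw [Finset.sum_congr rfl fun c _ => inner c]
  have cs : ∀ c : Fin n → Fin K × Fin 2,
      (∑ y : Fin n → Bool, (∏ i, bern p (c i) (y i))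
          * ((Scnt c (k,a) y : ℝ) / (Mcnt c (k,a) : ℝ)))
      = bern p (k,a) true * chi (Mcnt c (k,a)) := by
    intro c
    rw [cell_single (bern p) (bern_sum p hcell) c (k,a), chi]
  rw [Finset.sum_congr rfl fun c _ => by rw [cs c]]
  rw [Uq, Finset.mul_sum]
  refine Finset.sum_congr rfl fun c _ => ?_
  have : bern p (k,a) true = qb p (k,a) := by simp [bern]
  rw [this]
  ring

end WithP
end Split

section Moments
open Filter Topology
variable {K : ℕ} (p : Fin K × Fin 2 × Bool → ℝ)

def alphaq (k : Fin K) : ℝ := pcat p (k, 0) + pcat p (k, 1)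

noncomputable def V0 (n : ℕ) (k j : Fin K) : ℝ :=
  ∑ c : Fin n → Fin K × Fin 2, Wcat p c * ((Mst c k : ℝ)/(n:ℝ)) * ((Mst c j : ℝ)/(n:ℝ))

lemma Mst_cast {n : ℕ} (c : Fin n → Fin K × Fin 2) (k : Fin K) :
    ((Mst c k : ℝ)) = ∑ i, (if (c i).1 = k then (1:ℝ) else 0) := by
  rw [Mst]
  push_cast
  rw [Mcnt_cast, Mcnt_cast, ← Finset.sum_add_distrib]
  refine Finset.sum_congr rfl fun i _ => ?_
  rcases h : c i with ⟨k', a⟩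
  fin_cases a <;> by_cases hk : k' = k <;> simp [hk, Prod.ext_iff]

lemma Mst_le {n : ℕ} (c : Fin n → Fin K × Fin 2) (k : Fin K) :
    ((Mst c k : ℝ)) ≤ (n : ℝ) := by
  rw [Mst_cast]
  calc ∑ i : Fin n, (if (c i).1 = k then (1:ℝ) else 0) ≤ ∑ _i : Fin n, (1:ℝ) := by
        refine Finset.sum_le_sum fun i _ => ?_
        by_cases h : (c i).1 = k <;> simp [h]
    _ = n := by simp

lemma Wcat_nonneg (hpc0 : ∀ d, 0 ≤ pcat p d) {n : ℕ} (c : Fin n → Fin K × Fin 2) :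
    0 ≤ Wcat p c := Finset.prod_nonneg fun i _ => hpc0 (c i)

lemma sum_fI (k : Fin K) :
    ∑ t : Fin K × Fin 2, pcat p t * (if t.1 = k then (1:ℝ) else 0) = alphaq p k := by
  rw [Fintype.sum_prod_type]
  have : ∀ k' : Fin K, ∑ a : Fin 2, pcat p (k', a) * (if (k', a).1 = k then (1:ℝ) else 0)
      = if k' = k then alphaq p (k') else 0 := by
    intro k'
    by_cases h : k' = k <;> simp [h, Fin.sum_univ_two, alphaq]
  rw [Finset.sum_congr rfl fun k' _ => this k']
  simp [Finset.sum_ite_eq']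

lemma sum_fI2 (k j : Fin K) :
    ∑ t : Fin K × Fin 2, pcat p t * ((if t.1 = k then (1:ℝ) else 0)
        * (if t.1 = j then (1:ℝ) else 0))
      = if k = j then alphaq p k else 0 := by
  by_cases hkj : k = j
  · subst hkj
    rw [if_pos rfl, ← sum_fI p k]
    refine Finset.sum_congr rfl fun t _ => ?_
    by_cases h : t.1 = k <;> simp [h]
  · rw [if_neg hkj]
    refine Finset.sum_eq_zero fun t _ => ?_
    by_cases h : t.1 = k
    · simp [h, hkj]
    · simp [h]

lemma alphaq_nonneg (hpc0 : ∀ d, 0 ≤ pcat p d) (k : Fin K) : 0 ≤ alphaq p k :=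
  add_nonneg (hpc0 _) (hpc0 _)

lemma alphaq_le_one (hpc0 : ∀ d, 0 ≤ pcat p d) (hpc1 : ∑ d, pcat p d = 1) (k : Fin K) :
    alphaq p k ≤ 1 := by
  calc alphaq p k = ∑ t : Fin K × Fin 2, pcat p t * (if t.1 = k then (1:ℝ) else 0) :=
        (sum_fI p k).symm
    _ ≤ ∑ t : Fin K × Fin 2, pcat p t := by
        refine Finset.sum_le_sum fun t _ => ?_
        by_cases h : t.1 = k <;> simp [h, hpc0 t]
    _ = 1 := hpc1

lemma pcat_le_one (hpc0 : ∀ d, 0 ≤ pcat p d) (hpc1 : ∑ d, pcat p d = 1)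
    (d : Fin K × Fin 2) : pcat p d ≤ 1 := by
  rw [← hpc1]
  exact Finset.single_le_sum (fun t _ => hpc0 t) (Finset.mem_univ d)

lemma m1 (hpc1 : ∑ d, pcat p d = 1) {n : ℕ} (hn : (n:ℝ) ≠ 0) (k : Fin K) :
    ∑ c : Fin n → Fin K × Fin 2, Wcat p c * ((Mst c k : ℝ)/(n:ℝ)) = alphaq p k := by
  simp only [Wcat]
  have key := exp_sum (n := n) (pcat p) hpc1 (fun t => if t.1 = k then (1:ℝ) else 0)
  have step : ∑ c : Fin n → Fin K × Fin 2,
        (∏ i, pcat p (c i)) * ((Mst c k : ℝ)/(n:ℝ))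
      = (∑ c : Fin n → Fin K × Fin 2, (∏ i, pcat p (c i))
          * (∑ i, (if (c i).1 = k then (1:ℝ) else 0))) / n := by
    rw [Finset.sum_div]
    refine Finset.sum_congr rfl fun c _ => ?_
    rw [Mst_cast]
    ring
  rw [step, key, sum_fI]
  field_simp

lemma m2 (hpc1 : ∑ d, pcat p d = 1) {n : ℕ} (hn : 1 ≤ n) (k j : Fin K) :
    (n:ℝ) * (V0 p n k j - alphaq p k * alphaq p j)
      = (if k = j then alphaq p k else 0) - alphaq p k * alphaq p j := by
  have hn0 : (n:ℝ) ≠ 0 := by positivity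
  have key := exp_sum_mul_sum (n := n) (pcat p) hpc1
    (fun t => if t.1 = k then (1:ℝ) else 0) (fun t => if t.1 = j then (1:ℝ) else 0)
  rw [sum_fI, sum_fI, sum_fI2] at key
  have hV : V0 p n k j = (∑ c : Fin n → Fin K × Fin 2, (∏ i, pcat p (c i))
        * ((∑ i, (if (c i).1 = k then (1:ℝ) else 0))
          * (∑ i, (if (c i).1 = j then (1:ℝ) else 0)))) / ((n:ℝ)^2) := by
    rw [V0, Finset.sum_div]
    refine Finset.sum_congr rfl fun c _ => ?_
    rw [Mst_cast, Mst_cast, Wcat]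
    field_simp
  rw [hV, key]
  by_cases h : k = j <;> simp only [h, if_true, if_false] <;> field_simp <;> ring

lemma chi_bounds (m : ℕ) : chi m = 0 ∨ chi m = 1 := by
  by_cases h : m = 0 <;> simp [chi, h]

lemma Uq_diff (hpc1 : ∑ d, pcat p d = 1) {n : ℕ} (hn : (n:ℝ) ≠ 0) (k : Fin K) (a : Fin 2) :
    alphaq p k - Uq p n k a
      = ∑ c : Fin n → Fin K × Fin 2, Wcat p c * ((Mst c k : ℝ)/(n:ℝ))
          * (if Mcnt c (k,a) = 0 then (1:ℝ) else 0) := by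
  rw [← m1 p hpc1 hn k, Uq, ← Finset.sum_sub_distrib]
  refine Finset.sum_congr rfl fun c _ => ?_
  by_cases h : Mcnt c (k,a) = 0 <;> simp [chi, h] <;> ring

lemma Uq_diff_nonneg (hpc0 : ∀ d, 0 ≤ pcat p d) (hpc1 : ∑ d, pcat p d = 1) {n : ℕ}
    (hn : (n:ℝ) ≠ 0) (k : Fin K) (a : Fin 2) :
    0 ≤ alphaq p k - Uq p n k a := by
  rw [Uq_diff p hpc1 hn k a]
  refine Finset.sum_nonneg fun c _ => ?_
  have h1 : (0:ℝ) ≤ Wcat p c := Wcat_nonneg p hpc0 c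
  have h2 : (0:ℝ) ≤ (Mst c k : ℝ)/(n:ℝ) := by positivity
  have h3 : (0:ℝ) ≤ (if Mcnt c (k,a) = 0 then (1:ℝ) else 0) := by positivity
  positivity

lemma Uq_diff_le (hpc0 : ∀ d, 0 ≤ pcat p d) (hpc1 : ∑ d, pcat p d = 1) {n : ℕ}
    (hn : 1 ≤ n) (k : Fin K) (a : Fin 2) :
    alphaq p k - Uq p n k a ≤ (1 - pcat p (k,a))^n := by
  have hn0 : (n:ℝ) ≠ 0 := by positivity
  rw [Uq_diff p hpc1 hn0 k a]
  have step : ∀ c : Fin n → Fin K × Fin 2,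
      Wcat p c * ((Mst c k : ℝ)/(n:ℝ)) * (if Mcnt c (k,a) = 0 then (1:ℝ) else 0)
      ≤ Wcat p c * (if Mcnt c (k,a) = 0 then (1:ℝ) else 0) := by
    intro c
    have h1 : (0:ℝ) ≤ Wcat p c := Wcat_nonneg p hpc0 c
    have h2 : (Mst c k : ℝ)/(n:ℝ) ≤ 1 := by
      rw [div_le_one (by positivity)]
      exact Mst_le c k
    have h2' : (0:ℝ) ≤ (Mst c k : ℝ)/(n:ℝ) := by positivity
    have h3 : (0:ℝ) ≤ (if Mcnt c (k,a) = 0 then (1:ℝ) else 0) := by positivity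
    nlinarith [mul_nonneg (mul_nonneg h1 h3) (sub_nonneg.2 h2)]
  calc ∑ c : Fin n → Fin K × Fin 2, Wcat p c * ((Mst c k : ℝ)/(n:ℝ))
          * (if Mcnt c (k,a) = 0 then (1:ℝ) else 0)
      ≤ ∑ c : Fin n → Fin K × Fin 2, Wcat p c * (if Mcnt c (k,a) = 0 then (1:ℝ) else 0) :=
        Finset.sum_le_sum fun c _ => step c
    _ = (∑ d, pcat p d - pcat p (k,a))^n := by
        rw [← exp_indic_zero (pcat p) (k,a)]
        exact Finset.sum_congr rfl fun c _ => by rw [Wcat]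
    _ = (1 - pcat p (k,a))^n := by rw [hpc1]

lemma Uq_nonneg (hpc0 : ∀ d, 0 ≤ pcat p d) {n : ℕ} (k : Fin K) (a : Fin 2) :
    0 ≤ Uq p n k a := by
  refine Finset.sum_nonneg fun c _ => ?_
  have h1 : (0:ℝ) ≤ Wcat p c := Wcat_nonneg p hpc0 c
  have h2 : (0:ℝ) ≤ (Mst c k : ℝ)/(n:ℝ) := by positivity
  have h3 : (0:ℝ) ≤ chi (Mcnt c (k,a)) := by
    rcases chi_bounds (Mcnt c (k,a)) with h | h <;> rw [h] <;> norm_num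
  positivity

lemma Uq_le_one (hpc0 : ∀ d, 0 ≤ pcat p d) (hpc1 : ∑ d, pcat p d = 1) {n : ℕ}
    (hn : (n:ℝ) ≠ 0) (k : Fin K) (a : Fin 2) : Uq p n k a ≤ 1 :=
  le_trans (by linarith [Uq_diff_nonneg p hpc0 hpc1 hn k a])
    (alphaq_le_one p hpc0 hpc1 k)

lemma V0_diff_nonneg (hpc0 : ∀ d, 0 ≤ pcat p d) {n : ℕ} (hn : (n:ℝ) ≠ 0) (k j : Fin K) :
    0 ≤ V0 p n k j - Vq p n k j := by
  rw [V0, Vq, ← Finset.sum_sub_distrib]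
  refine Finset.sum_nonneg fun c _ => ?_
  have h1 : (0:ℝ) ≤ Wcat p c := Wcat_nonneg p hpc0 c
  have h2 : (0:ℝ) ≤ (Mst c k : ℝ)/(n:ℝ) := by positivity
  have h3 : (0:ℝ) ≤ (Mst c j : ℝ)/(n:ℝ) := by positivity
  rcases chi_bounds (Mcnt c (k,1)) with hA | hA <;>
    rcases chi_bounds (Mcnt c (j,0)) with hB | hB <;>
    rw [hA, hB] <;> nlinarith [mul_nonneg (mul_nonneg h1 h2) h3]

lemma V0_diff_le (hpc0 : ∀ d, 0 ≤ pcat p d) (hpc1 : ∑ d, pcat p d = 1) {n : ℕ}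
    (hn : 1 ≤ n) (k j : Fin K) :
    V0 p n k j - Vq p n k j ≤ (1 - pcat p (k,1))^n + (1 - pcat p (j,0))^n := by
  have hn0 : (n:ℝ) ≠ 0 := by positivity
  rw [V0, Vq, ← Finset.sum_sub_distrib]
  have step : ∀ c : Fin n → Fin K × Fin 2,
      Wcat p c * ((Mst c k : ℝ)/(n:ℝ)) * ((Mst c j : ℝ)/(n:ℝ))
        - Wcat p c * ((Mst c k : ℝ)/(n:ℝ)) * ((Mst c j : ℝ)/(n:ℝ))
            * chi (Mcnt c (k,1)) * chi (Mcnt c (j,0))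
      ≤ Wcat p c * (if Mcnt c (k,1) = 0 then (1:ℝ) else 0)
        + Wcat p c * (if Mcnt c (j,0) = 0 then (1:ℝ) else 0) := by
    intro c
    have h1 : (0:ℝ) ≤ Wcat p c := Wcat_nonneg p hpc0 c
    have h2 : (Mst c k : ℝ)/(n:ℝ) ≤ 1 := by
      rw [div_le_one (by positivity)]; exact Mst_le c k
    have h2' : (0:ℝ) ≤ (Mst c k : ℝ)/(n:ℝ) := by positivity
    have h3 : (Mst c j : ℝ)/(n:ℝ) ≤ 1 := by
      rw [div_le_one (by positivity)]; exact Mst_le c j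
    have h3' : (0:ℝ) ≤ (Mst c j : ℝ)/(n:ℝ) := by positivity
    by_cases hA : Mcnt c (k,1) = 0 <;> by_cases hB : Mcnt c (j,0) = 0 <;>
      simp [chi, hA, hB] <;>
      nlinarith [mul_nonneg (mul_nonneg h1 h2') h3', mul_nonneg h1 h3',
        mul_nonneg h1 h2', mul_nonneg (mul_nonneg h1 h2') (sub_nonneg.2 h3),
        mul_nonneg (mul_nonneg h1 h3') (sub_nonneg.2 h2)]
  calc ∑ c : Fin n → Fin K × Fin 2, (Wcat p c * ((Mst c k : ℝ)/(n:ℝ)) * ((Mst c j : ℝ)/(n:ℝ))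
        - Wcat p c * ((Mst c k : ℝ)/(n:ℝ)) * ((Mst c j : ℝ)/(n:ℝ))
            * chi (Mcnt c (k,1)) * chi (Mcnt c (j,0)))
      ≤ ∑ c : Fin n → Fin K × Fin 2, (Wcat p c * (if Mcnt c (k,1) = 0 then (1:ℝ) else 0)
        + Wcat p c * (if Mcnt c (j,0) = 0 then (1:ℝ) else 0)) :=
        Finset.sum_le_sum fun c _ => step c
    _ = (1 - pcat p (k,1))^n + (1 - pcat p (j,0))^n := by
        rw [Finset.sum_add_distrib]
        have e1 : ∑ c : Fin n → Fin K × Fin 2,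
            Wcat p c * (if Mcnt c (k,1) = 0 then (1:ℝ) else 0)
            = (∑ d, pcat p d - pcat p (k,1))^n := by
          rw [← exp_indic_zero (pcat p) (k,1)]
          exact Finset.sum_congr rfl fun c _ => by rw [Wcat]
        have e2 : ∑ c : Fin n → Fin K × Fin 2,
            Wcat p c * (if Mcnt c (j,0) = 0 then (1:ℝ) else 0)
            = (∑ d, pcat p d - pcat p (j,0))^n := by
          rw [← exp_indic_zero (pcat p) (j,0)]
          exact Finset.sum_congr rfl fun c _ => by rw [Wcat]
        rw [e1, e2, hpc1]

lemma keylim (hpc0 : ∀ d, 0 ≤ pcat p d) (hpc1 : ∑ d, pcat p d = 1)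
    (hcell : ∀ d, 0 < pcat p d) (k j : Fin K) :
    Tendsto (fun n : ℕ => (n:ℝ) * (Vq p n k j - Uq p n k 1 * Uq p n j 0)) atTop
      (𝓝 ((if k = j then alphaq p k else 0) - alphaq p k * alphaq p j)) := by
  have geo : ∀ d : Fin K × Fin 2,
      Tendsto (fun n : ℕ => (n:ℝ) * (1 - pcat p d)^n) atTop (𝓝 0) := by
    intro d
    have hlt : ‖(1:ℝ) - pcat p d‖ < 1 := by
      rw [Real.norm_eq_abs, abs_lt]
      constructor <;> nlinarith [hcell d, pcat_le_one p hpc0 hpc1 d]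
    have := (summable_pow_mul_geometric_of_norm_lt_one 1 hlt).tendsto_atTop_zero
    simpa using this
  have hA : Tendsto (fun n : ℕ => (n:ℝ) * (V0 p n k j - Vq p n k j)) atTop (𝓝 0) := by
    apply squeeze_zero_norm'
      (a := fun n : ℕ => (n:ℝ) * (1 - pcat p (k,1))^n + (n:ℝ) * (1 - pcat p (j,0))^n)
    · filter_upwards [eventually_ge_atTop 1] with n hn
      have hn0 : (n:ℝ) ≠ 0 := by positivity
      have h1 := V0_diff_nonneg p hpc0 hn0 k j
      have h2 := V0_diff_le p hpc0 hpc1 hn k j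
      have hnn : (0:ℝ) ≤ (n:ℝ) := by positivity
      rw [Real.norm_eq_abs, abs_of_nonneg (by nlinarith)]
      nlinarith
    · simpa using (geo (k,1)).add (geo (j,0))
  have hB : Tendsto (fun n : ℕ => (n:ℝ) * (alphaq p k - Uq p n k 1) * Uq p n j 0)
      atTop (𝓝 0) := by
    apply squeeze_zero_norm' (a := fun n : ℕ => (n:ℝ) * (1 - pcat p (k,1))^n)
    · filter_upwards [eventually_ge_atTop 1] with n hn
      have hn0 : (n:ℝ) ≠ 0 := by positivity
      have h1 := Uq_diff_nonneg p hpc0 hpc1 hn0 k 1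
      have h2 := Uq_diff_le p hpc0 hpc1 hn k 1
      have h3 := Uq_nonneg (n := n) p hpc0 j 0
      have h4 := Uq_le_one p hpc0 hpc1 hn0 j 0
      have hnn : (0:ℝ) ≤ (n:ℝ) := by positivity
      rw [Real.norm_eq_abs, abs_of_nonneg (mul_nonneg (mul_nonneg hnn h1) h3)]
      nlinarith [mul_le_mul_of_nonneg_left h2 hnn,
        mul_nonneg (mul_nonneg hnn h1) (sub_nonneg.2 h4)]
    · exact geo (k,1)
  have hC : Tendsto (fun n : ℕ => alphaq p k * ((n:ℝ) * (alphaq p j - Uq p n j 0)))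
      atTop (𝓝 0) := by
    apply squeeze_zero_norm' (a := fun n : ℕ => (n:ℝ) * (1 - pcat p (j,0))^n)
    · filter_upwards [eventually_ge_atTop 1] with n hn
      have hn0 : (n:ℝ) ≠ 0 := by positivity
      have h1 := Uq_diff_nonneg p hpc0 hpc1 hn0 j 0
      have h2 := Uq_diff_le p hpc0 hpc1 hn j 0
      have h3 := alphaq_nonneg p hpc0 k
      have h4 := alphaq_le_one p hpc0 hpc1 k
      have hnn : (0:ℝ) ≤ (n:ℝ) := by positivity
      rw [Real.norm_eq_abs, abs_of_nonneg (by nlinarith [mul_nonneg hnn h1])]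
      nlinarith [mul_nonneg hnn h1, mul_nonneg (mul_nonneg hnn h1) h3,
        mul_le_mul_of_nonneg_left h2 hnn]
    · exact geo (j,0)
  have lim : Tendsto (fun n : ℕ =>
      ((if k = j then alphaq p k else 0) - alphaq p k * alphaq p j)
        - (n:ℝ) * (V0 p n k j - Vq p n k j)
        + (n:ℝ) * (alphaq p k - Uq p n k 1) * Uq p n j 0
        + alphaq p k * ((n:ℝ) * (alphaq p j - Uq p n j 0))) atTop
      (𝓝 ((if k = j then alphaq p k else 0) - alphaq p k * alphaq p j)) := by
    have hconst : Tendsto (fun _ : ℕ =>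
        ((if k = j then alphaq p k else 0) - alphaq p k * alphaq p j)) atTop
        (𝓝 ((if k = j then alphaq p k else 0) - alphaq p k * alphaq p j)) :=
      tendsto_const_nhds
    have := ((hconst.sub hA).add hB).add hC
    simpa using this
  refine lim.congr' ?_
  filter_upwards [eventually_ge_atTop 1] with n hn
  have m2n := m2 p hpc1 hn k j
  linear_combination (-1 : ℝ) * m2n

end Moments

section Bridge
variable {K : ℕ}

lemma integral_vec (P : Measure Ω) [IsProbabilityMeasure P]
    (data : ℕ → Ω → Fin K × Fin 2 × Bool) (hdata : ∀ i, Measurable (data i))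
    (hfun : iIndepFun data P)
    (pdist : Fin K × Fin 2 × Bool → ℝ)
    (hpd : ∀ (i : ℕ) t, (P (data i ⁻¹' {t})).toReal = pdist t)
    (n : ℕ) (G : (Fin n → Fin K × Fin 2 × Bool) → ℝ) :
    ∫ ω, G (fun i : Fin n => data i ω) ∂P
      = ∑ v : Fin n → Fin K × Fin 2 × Bool, (∏ i, pdist (v i)) * G v := by
  classical
  have hset : ∀ v : Fin n → Fin K × Fin 2 × Bool,
      {ω | (fun i : Fin n => data i ω) = v} = ⋂ i : Fin n, data (i:ℕ) ⁻¹' {v i} := by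
    intro v
    ext ω
    simp [funext_iff]
  have hmeas : ∀ v : Fin n → Fin K × Fin 2 × Bool,
      MeasurableSet {ω | (fun i : Fin n => data i ω) = v} := by
    intro v
    rw [hset]
    exact MeasurableSet.iInter fun i => (hdata i) (measurableSet_singleton (v i))
  have hprob : ∀ v : Fin n → Fin K × Fin 2 × Bool,
      P {ω | (fun i : Fin n => data i ω) = v} = ∏ i : Fin n, P (data (i:ℕ) ⁻¹' {v i}) := by
    intro v
    set sets : ∀ _ : ℕ, Set (Fin K × Fin 2 × Bool) :=
      fun i => if h : i < n then {v ⟨i, h⟩} else Set.univ with hsets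
    have hmeas' : ∀ i, i ∈ Finset.range n → MeasurableSet (sets i) := by
      intro i _
      by_cases h : i < n
      · simp only [hsets, dif_pos h]
        exact measurableSet_singleton _
      · simp only [hsets, dif_neg h]
        exact MeasurableSet.univ
    have key := hfun.measure_inter_preimage_eq_mul (Finset.range n) hmeas'
    have hseteq : (⋂ i ∈ Finset.range n, data i ⁻¹' sets i)
        = {ω | (fun i : Fin n => data i ω) = v} := by
      ext ω
      simp only [Set.mem_iInter, Finset.mem_range, Set.mem_preimage, Set.mem_setOf_eq,
        funext_iff]
      constructor
      · intro h i
        have := h (i:ℕ) i.isLt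
        simpa [hsets, dif_pos i.isLt] using this
      · intro h i hi
        simp only [hsets, dif_pos hi]
        exact h ⟨i, hi⟩
    have hprodeq : ∏ i ∈ Finset.range n, P (data i ⁻¹' sets i)
        = ∏ i : Fin n, P (data (i:ℕ) ⁻¹' {v i}) := by
      rw [← Fin.prod_univ_eq_prod_range (fun i => P (data i ⁻¹' sets i)) n]
      refine Finset.prod_congr rfl fun i _ => ?_
      congr 1
      simp [hsets, dif_pos i.isLt]
    rw [hseteq, hprodeq] at key
    exact key
  have hdec : ∀ ω, G (fun i : Fin n => data i ω)
      = ∑ v : Fin n → Fin K × Fin 2 × Bool,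
          Set.indicator {ω' | (fun i : Fin n => data i ω') = v} (fun _ => G v) ω := by
    intro ω
    rw [Finset.sum_eq_single (fun i : Fin n => data i ω)]
    · rw [Set.indicator_of_mem (by simp : ω ∈ {ω' | (fun i : Fin n => data i ω') = _})]
    · intro v _ hv
      rw [Set.indicator_of_notMem]
      simp only [Set.mem_setOf_eq]
      exact fun h => absurd h.symm hv
    · intro h
      exact absurd (Finset.mem_univ _) h
  calc ∫ ω, G (fun i : Fin n => data i ω) ∂P
      = ∫ ω, ∑ v : Fin n → Fin K × Fin 2 × Bool,
          Set.indicator {ω' | (fun i : Fin n => data i ω') = v} (fun _ => G v) ω ∂P := by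
        exact integral_congr_ae (Filter.Eventually.of_forall hdec)
    _ = ∑ v : Fin n → Fin K × Fin 2 × Bool,
          ∫ ω, Set.indicator {ω' | (fun i : Fin n => data i ω') = v} (fun _ => G v) ω ∂P := by
        exact integral_finset_sum _ fun v _ =>
          (integrable_const (G v)).indicator (hmeas v)
    _ = ∑ v : Fin n → Fin K × Fin 2 × Bool,
          (P {ω' | (fun i : Fin n => data i ω') = v}).toReal * G v := by
        refine Finset.sum_congr rfl fun v _ => ?_
        rw [integral_indicator_const (G v) (hmeas v), smul_eq_mul, measureReal_def]
    _ = ∑ v : Fin n → Fin K × Fin 2 × Bool, (∏ i, pdist (v i)) * G v := by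
        refine Finset.sum_congr rfl fun v _ => ?_
        congr 1
        rw [hprob v, ENNReal.toReal_prod]
        exact Finset.prod_congr rfl fun i _ => hpd i (v i)

lemma bool_split (P : Measure Ω) {S : Set Ω} (hS : MeasurableSet S)
    {f : Ω → Bool} (hf : Measurable f) :
    P {ω | ω ∈ S ∧ f ω = true} + P {ω | ω ∈ S ∧ f ω = false} = P S := by
  have h1 : MeasurableSet {ω | ω ∈ S ∧ f ω = false} :=
    hS.inter (hf (measurableSet_singleton false))
  rw [← measure_union ?disj h1]
  · congr 1
    ext ω
    simp only [Set.mem_union, Set.mem_setOf_eq]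
    constructor
    · rintro (⟨h, _⟩ | ⟨h, _⟩) <;> exact h
    · intro h
      cases hf' : f ω
      · exact Or.inr ⟨h, rfl⟩
      · exact Or.inl ⟨h, rfl⟩
  case disj =>
    rw [Set.disjoint_left]
    rintro ω ⟨_, ht⟩ ⟨_, hfa⟩
    rw [ht] at hfa
    exact Bool.noConfusion hfa

lemma fin2_split (P : Measure Ω) {S : Set Ω} (hS : MeasurableSet S)
    {f : Ω → Fin 2} (hf : Measurable f) :
    P {ω | ω ∈ S ∧ f ω = 0} + P {ω | ω ∈ S ∧ f ω = 1} = P S := by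
  have h1 : MeasurableSet {ω | ω ∈ S ∧ f ω = 1} :=
    hS.inter (hf (measurableSet_singleton 1))
  rw [← measure_union ?disj h1]
  · congr 1
    ext ω
    simp only [Set.mem_union, Set.mem_setOf_eq]
    constructor
    · rintro (⟨h, _⟩ | ⟨h, _⟩) <;> exact h
    · intro h
      have h01 : f ω = 0 ∨ f ω = 1 := by
        have : ∀ x : Fin 2, x = 0 ∨ x = 1 := by decide
        exact this (f ω)
      rcases h01 with h' | h'
      · exact Or.inl ⟨h, h'⟩
      · exact Or.inr ⟨h, h'⟩
  case disj =>
    rw [Set.disjoint_left]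
    rintro ω ⟨_, ht⟩ ⟨_, hfa⟩
    rw [ht] at hfa
    exact absurd hfa (by decide)

end Bridge

section MainProof
variable {K : ℕ}

lemma psiBar_bridge (data : ℕ → Ω → Fin K × Fin 2 × Bool) (n : ℕ) (a : Fin 2) (ω : Ω) :
    psiBar data n a ω = psiBarV n (fun i : Fin n => data (i:ℕ) ω) a := by
  have hcnt : ∀ (k : Fin K) (a' : Fin 2) (y : Bool),
      cnt data n k a' y ω = cntV (fun i : Fin n => data (i:ℕ) ω) k a' y := by
    intro k a' y
    rw [cnt, cntV, Mcnt, Finset.card_filter, Finset.card_filter,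
      ← Fin.sum_univ_eq_sum_range (fun i => if data i ω = (k, a', y) then 1 else 0) n]
  have harm : ∀ (k : Fin K) (a' : Fin 2),
      cntArm data n k a' ω = cntArmV (fun i : Fin n => data (i:ℕ) ω) k a' := by
    intro k a'
    rw [cntArm, cntArmV, hcnt, hcnt]
  have hstudy : ∀ k : Fin K,
      cntStudy data n k ω = cntStudyV (fun i : Fin n => data (i:ℕ) ω) k := by
    intro k
    rw [cntStudy, cntStudyV, harm, harm]
  rw [psiBar, psiBarV]
  refine Finset.sum_congr rfl fun k _ => ?_
  rw [hstudy, psiHat, psiHatV, hcnt, harm]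

end MainProof

/-- **Asymptotic covariance between the two aggregated arms.**
`n · Cov(ψ̂_n(1), ψ̂_n(0)) → Σ_k α_k ψ_k(1) ψ_k(0) − ψ(1) ψ(0)`, i.e. the covariance of
the pair `(ψ_H(1), ψ_H(0))` induced by the random study label `H`. The covariance is
written as `E[ψ̂_n(1) ψ̂_n(0)] − E[ψ̂_n(1)] E[ψ̂_n(0)]`. -/
theorem aggregated_arms_asymptotic_covariance {K : ℕ}
    (P : Measure Ω) [IsProbabilityMeasure P]
    (H : Ω → Fin K) (A : Ω → Fin 2) (Ypot : Fin 2 → Ω → Bool)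
    (hH : Measurable H) (hA : Measurable A) (hY : ∀ a, Measurable (Ypot a))
    (hCI : CondIndepGivenStudy P H A Ypot)
    (data : ℕ → Ω → Fin K × Fin 2 × Bool)
    (hdata : ∀ i, Measurable (data i))
    (hIID : IIDSample P H A Ypot data)
    (halpha : ∀ k, 0 < alpha P H k)
    (hprop : ∀ k a, 0 < propens P H A k a) :
    Tendsto
      (fun n : ℕ => (n : ℝ) *
        ((∫ ω, psiBar data n 1 ω * psiBar data n 0 ω ∂P)
          - (∫ ω, psiBar data n 1 ω ∂P) * (∫ ω, psiBar data n 0 ω ∂P)))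
      atTop
      (𝓝 (∑ k, alpha P H k * psi P H Ypot k 1 * psi P H Ypot k 0
            - psiPop P H Ypot 1 * psiPop P H Ypot 0)) := by
  classical
  set X : Ω → Fin K × Fin 2 × Bool := fun ω => (H ω, A ω, Ypot (A ω) ω) with hXdef
  have hYA : Measurable fun ω => Ypot (A ω) ω := by
    have hrw : (fun ω => Ypot (A ω) ω) = fun ω => if A ω = 0 then Ypot 0 ω else Ypot 1 ω := by
      funext ω
      by_cases h : A ω = 0
      · rw [if_pos h, h]
      · rw [if_neg h]
        have h2 : ∀ x : Fin 2, x ≠ 0 → x = 1 := by decide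
        rw [h2 (A ω) h]
    rw [hrw]
    exact Measurable.ite (hA (measurableSet_singleton 0)) (hY 0) (hY 1)
  have hXm : Measurable X := hH.prodMk (hA.prodMk hYA)
  set pdist : Fin K × Fin 2 × Bool → ℝ := fun t => (P (X ⁻¹' {t})).toReal with hpdistdef
  -- basic measurable sets
  have mH : ∀ k : Fin K, MeasurableSet {ω | H ω = k} :=
    fun k => hH (measurableSet_singleton k)
  have mHA : ∀ (k : Fin K) (a : Fin 2), MeasurableSet {ω | H ω = k ∧ A ω = a} :=
    fun k a => (mH k).inter (hA (measurableSet_singleton a))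
  have mHAY : ∀ (k : Fin K) (a : Fin 2) (b : Fin 2) (y : Bool),
      MeasurableSet {ω | H ω = k ∧ A ω = a ∧ Ypot b ω = y} :=
    fun k a b y => (mH k).inter ((hA (measurableSet_singleton a)).inter
      ((hY b) (measurableSet_singleton y)))
  have mHY : ∀ (k : Fin K) (b : Fin 2) (y : Bool),
      MeasurableSet {ω | H ω = k ∧ Ypot b ω = y} :=
    fun k b y => (mH k).inter ((hY b) (measurableSet_singleton y))
  -- preimage description
  have hXpre : ∀ (k : Fin K) (a : Fin 2) (y : Bool),
      X ⁻¹' {(k, a, y)} = {ω | H ω = k ∧ A ω = a ∧ Ypot a ω = y} := by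
    intro k a y
    ext ω
    simp only [Set.mem_preimage, Set.mem_singleton_iff, Set.mem_setOf_eq, hXdef,
      Prod.ext_iff]
    constructor
    · rintro ⟨h1, h2, h3⟩
      refine ⟨h1, h2, ?_⟩
      rw [← h2]
      exact h3
    · rintro ⟨h1, h2, h3⟩
      refine ⟨h1, h2, ?_⟩
      rw [h2]
      exact h3
  have hpdE : ∀ (k : Fin K) (a : Fin 2) (y : Bool),
      pdist (k, a, y) = (P {ω | H ω = k ∧ A ω = a ∧ Ypot a ω = y}).toReal := by
    intro k a y
    rw [hpdistdef]
    simp only []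
    rw [hXpre]
  -- pcat in terms of P
  have hpcat : ∀ (k : Fin K) (a : Fin 2),
      pcat pdist (k, a) = (P {ω | H ω = k ∧ A ω = a}).toReal := by
    intro k a
    have hsplit := bool_split P (mHA k a) (hY a)
    have e1 : {ω | ω ∈ {ω | H ω = k ∧ A ω = a} ∧ Ypot a ω = true}
        = {ω | H ω = k ∧ A ω = a ∧ Ypot a ω = true} := by
      ext ω; simp only [Set.mem_setOf_eq]; tauto
    have e2 : {ω | ω ∈ {ω | H ω = k ∧ A ω = a} ∧ Ypot a ω = false}
        = {ω | H ω = k ∧ A ω = a ∧ Ypot a ω = false} := by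
      ext ω; simp only [Set.mem_setOf_eq]; tauto
    rw [e1, e2] at hsplit
    rw [pcat]
    simp only []
    rw [hpdE, hpdE, ← ENNReal.toReal_add (measure_ne_top P _) (measure_ne_top P _), hsplit]
  -- alphaq in terms of alpha
  have halphaq : ∀ k : Fin K, alphaq pdist k = alpha P H k := by
    intro k
    have hsplit := fin2_split P (mH k) hA
    have e1 : {ω | ω ∈ {ω | H ω = k} ∧ A ω = 0} = {ω | H ω = k ∧ A ω = 0} := by
      ext ω; simp only [Set.mem_setOf_eq]
    have e2 : {ω | ω ∈ {ω | H ω = k} ∧ A ω = 1} = {ω | H ω = k ∧ A ω = 1} := by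
      ext ω; simp only [Set.mem_setOf_eq]
    rw [e1, e2] at hsplit
    rw [alphaq, hpcat, hpcat, alpha,
      ← ENNReal.toReal_add (measure_ne_top P _) (measure_ne_top P _), hsplit]
  -- positivity of cells
  have halphapos : ∀ k : Fin K, 0 < (P {ω | H ω = k}).toReal := fun k => halpha k
  have hwpos : ∀ (k : Fin K) (a : Fin 2), 0 < (P {ω | H ω = k ∧ A ω = a}).toReal := by
    intro k a
    have h := hprop k a
    rw [propens] at h
    rcases div_pos_iff.mp h with ⟨hx, _⟩ | ⟨_, hy⟩
    · exact hx
    · exact absurd hy (not_lt.2 ENNReal.toReal_nonneg)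
  have hcell : ∀ d : Fin K × Fin 2, 0 < pcat pdist d := by
    intro d
    rcases d with ⟨k, a⟩
    rw [hpcat]
    exact hwpos k a
  have hpc0 : ∀ d : Fin K × Fin 2, 0 ≤ pcat pdist d := fun d => (hcell d).le
  -- total mass one
  have hsum1 : ∑ t : Fin K × Fin 2 × Bool, pdist t = 1 := by
    have hmeas : ∀ t : Fin K × Fin 2 × Bool, t ∈ (Finset.univ : Finset (Fin K × Fin 2 × Bool))
        → MeasurableSet (X ⁻¹' {t}) := fun t _ => hXm (measurableSet_singleton t)
    have key := MeasureTheory.sum_measure_preimage_singleton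
      (μ := P) (Finset.univ : Finset (Fin K × Fin 2 × Bool)) hmeas
    have huniv : X ⁻¹' ((Finset.univ : Finset (Fin K × Fin 2 × Bool)) : Set (Fin K × Fin 2 × Bool))
        = Set.univ := by
      ext ω
      simp
    rw [huniv] at key
    have : ∑ t : Fin K × Fin 2 × Bool, pdist t
        = (∑ t : Fin K × Fin 2 × Bool, P (X ⁻¹' {t})).toReal := by
      rw [ENNReal.toReal_sum fun t _ => measure_ne_top P _]
    rw [this, key]
    simp
  have hpc1 : ∑ d : Fin K × Fin 2, pcat pdist d = 1 := by
    rw [← hsum1, Fintype.sum_prod_type, Fintype.sum_prod_type]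
    refine Finset.sum_congr rfl fun k _ => ?_
    rw [Fintype.sum_prod_type]
    refine Finset.sum_congr rfl fun a _ => ?_
    rw [Fintype.sum_bool, pcat]
  -- conditional independence: qb = psi
  have hq : ∀ (k : Fin K) (a : Fin 2), qb pdist (k, a) = psi P H Ypot k a := by
    intro k a
    have hkey : P {ω | H ω = k ∧ A ω = a ∧ Ypot a ω = true} * P {ω | H ω = k}
        = P {ω | H ω = k ∧ A ω = a} * P {ω | H ω = k ∧ Ypot a ω = true} := by
      fin_cases a
      · -- a = 0 : sum over Ypot 1
        have s1 := bool_split P (mHAY k 0 0 true) (hY 1)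
        have s2 := bool_split P (mHY k 0 true) (hY 1)
        have e1 : ∀ y1 : Bool, {ω | ω ∈ {ω | H ω = k ∧ A ω = 0 ∧ Ypot 0 ω = true} ∧ Ypot 1 ω = y1}
            = {ω | H ω = k ∧ A ω = 0 ∧ Ypot 0 ω = true ∧ Ypot 1 ω = y1} := by
          intro y1; ext ω; simp only [Set.mem_setOf_eq]; tauto
        have e2 : ∀ y1 : Bool, {ω | ω ∈ {ω | H ω = k ∧ Ypot 0 ω = true} ∧ Ypot 1 ω = y1}
            = {ω | H ω = k ∧ Ypot 0 ω = true ∧ Ypot 1 ω = y1} := by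
          intro y1; ext ω; simp only [Set.mem_setOf_eq]; tauto
        rw [e1 true, e1 false] at s1
        rw [e2 true, e2 false] at s2
        have c1 := hCI k 0 true true
        have c2 := hCI k 0 true false
        calc P {ω | H ω = k ∧ A ω = 0 ∧ Ypot 0 ω = true} * P {ω | H ω = k}
            = (P {ω | H ω = k ∧ A ω = 0 ∧ Ypot 0 ω = true ∧ Ypot 1 ω = true}
              + P {ω | H ω = k ∧ A ω = 0 ∧ Ypot 0 ω = true ∧ Ypot 1 ω = false})
                * P {ω | H ω = k} := by rw [s1]
          _ = P {ω | H ω = k ∧ A ω = 0 ∧ Ypot 0 ω = true ∧ Ypot 1 ω = true} * P {ω | H ω = k}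
              + P {ω | H ω = k ∧ A ω = 0 ∧ Ypot 0 ω = true ∧ Ypot 1 ω = false}
                * P {ω | H ω = k} := by rw [add_mul]
          _ = P {ω | H ω = k ∧ A ω = 0} * P {ω | H ω = k ∧ Ypot 0 ω = true ∧ Ypot 1 ω = true}
              + P {ω | H ω = k ∧ A ω = 0}
                * P {ω | H ω = k ∧ Ypot 0 ω = true ∧ Ypot 1 ω = false} := by rw [c1, c2]
          _ = P {ω | H ω = k ∧ A ω = 0}
              * (P {ω | H ω = k ∧ Ypot 0 ω = true ∧ Ypot 1 ω = true}
                + P {ω | H ω = k ∧ Ypot 0 ω = true ∧ Ypot 1 ω = false}) := by rw [mul_add]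
          _ = P {ω | H ω = k ∧ A ω = 0} * P {ω | H ω = k ∧ Ypot 0 ω = true} := by rw [s2]
      · -- a = 1 : sum over Ypot 0
        have s1 := bool_split P (mHAY k 1 1 true) (hY 0)
        have s2 := bool_split P (mHY k 1 true) (hY 0)
        have e1 : ∀ y0 : Bool, {ω | ω ∈ {ω | H ω = k ∧ A ω = 1 ∧ Ypot 1 ω = true} ∧ Ypot 0 ω = y0}
            = {ω | H ω = k ∧ A ω = 1 ∧ Ypot 0 ω = y0 ∧ Ypot 1 ω = true} := by
          intro y0; ext ω; simp only [Set.mem_setOf_eq]; tauto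
        have e2 : ∀ y0 : Bool, {ω | ω ∈ {ω | H ω = k ∧ Ypot 1 ω = true} ∧ Ypot 0 ω = y0}
            = {ω | H ω = k ∧ Ypot 0 ω = y0 ∧ Ypot 1 ω = true} := by
          intro y0; ext ω; simp only [Set.mem_setOf_eq]; tauto
        rw [e1 true, e1 false] at s1
        rw [e2 true, e2 false] at s2
        have c1 := hCI k 1 true true
        have c2 := hCI k 1 false true
        calc P {ω | H ω = k ∧ A ω = 1 ∧ Ypot 1 ω = true} * P {ω | H ω = k}
            = (P {ω | H ω = k ∧ A ω = 1 ∧ Ypot 0 ω = true ∧ Ypot 1 ω = true}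
              + P {ω | H ω = k ∧ A ω = 1 ∧ Ypot 0 ω = false ∧ Ypot 1 ω = true})
                * P {ω | H ω = k} := by rw [s1]
          _ = P {ω | H ω = k ∧ A ω = 1 ∧ Ypot 0 ω = true ∧ Ypot 1 ω = true} * P {ω | H ω = k}
              + P {ω | H ω = k ∧ A ω = 1 ∧ Ypot 0 ω = false ∧ Ypot 1 ω = true}
                * P {ω | H ω = k} := by rw [add_mul]
          _ = P {ω | H ω = k ∧ A ω = 1} * P {ω | H ω = k ∧ Ypot 0 ω = true ∧ Ypot 1 ω = true}
              + P {ω | H ω = k ∧ A ω = 1}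
                * P {ω | H ω = k ∧ Ypot 0 ω = false ∧ Ypot 1 ω = true} := by rw [c1, c2]
          _ = P {ω | H ω = k ∧ A ω = 1}
              * (P {ω | H ω = k ∧ Ypot 0 ω = true ∧ Ypot 1 ω = true}
                + P {ω | H ω = k ∧ Ypot 0 ω = false ∧ Ypot 1 ω = true}) := by rw [mul_add]
          _ = P {ω | H ω = k ∧ A ω = 1} * P {ω | H ω = k ∧ Ypot 1 ω = true} := by rw [s2]
    -- pass to real numbers
    have hkeyR : (P {ω | H ω = k ∧ A ω = a ∧ Ypot a ω = true}).toReal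
          * (P {ω | H ω = k}).toReal
        = (P {ω | H ω = k ∧ A ω = a}).toReal
          * (P {ω | H ω = k ∧ Ypot a ω = true}).toReal := by
      rw [← ENNReal.toReal_mul, ← ENNReal.toReal_mul, hkey]
    rw [qb, psi]
    show pdist (k, a, true) / pcat pdist (k, a) = _
    rw [hpdE, hpcat]
    rw [div_eq_div_iff (hwpos k a).ne' (halphapos k).ne']
    linarith [hkeyR]
  -- the per-i law of the data
  have hpd : ∀ (i : ℕ) (t : Fin K × Fin 2 × Bool), (P (data i ⁻¹' {t})).toReal = pdist t := by
    intro i t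
    have h1 := hIID.2 i
    have : P (data i ⁻¹' {t}) = P (X ⁻¹' {t}) := by
      calc P (data i ⁻¹' {t})
          = (P.map (data i)) {t} :=
            (Measure.map_apply (hdata i) (measurableSet_singleton t)).symm
        _ = (P.map X) {t} := by rw [h1]
        _ = P (X ⁻¹' {t}) := Measure.map_apply hXm (measurableSet_singleton t)
    rw [hpdistdef]
    simp only []
    rw [this]
  -- integral identities
  have hint1 : ∀ n : ℕ, ∫ ω, psiBar data n 1 ω * psiBar data n 0 ω ∂P
      = ∑ k, ∑ j, qb pdist (k,1) * qb pdist (j,0) * Vq pdist n k j := by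
    intro n
    have heq : (fun ω => psiBar data n 1 ω * psiBar data n 0 ω)
        = fun ω => (fun v => psiBarV n v 1 * psiBarV n v 0) (fun i : Fin n => data (i:ℕ) ω) := by
      funext ω
      rw [psiBar_bridge, psiBar_bridge]
    rw [heq, integral_vec P data hdata hIID.1 pdist hpd n
      (fun v => psiBarV n v 1 * psiBarV n v 0)]
    rw [← intProd pdist hcell n]
    refine Finset.sum_congr rfl fun v _ => ?_
    ring
  have hint2 : ∀ (n : ℕ) (a : Fin 2), ∫ ω, psiBar data n a ω ∂P
      = ∑ k, qb pdist (k,a) * Uq pdist n k a := by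
    intro n a
    have heq : (fun ω => psiBar data n a ω)
        = fun ω => (fun v => psiBarV n v a) (fun i : Fin n => data (i:ℕ) ω) := by
      funext ω
      rw [psiBar_bridge]
    rw [heq, integral_vec P data hdata hIID.1 pdist hpd n (fun v => psiBarV n v a)]
    rw [← intSingle pdist hcell n a]
  -- sequence identity
  have hseq : ∀ n : ℕ, (n : ℝ) *
        ((∫ ω, psiBar data n 1 ω * psiBar data n 0 ω ∂P)
          - (∫ ω, psiBar data n 1 ω ∂P) * (∫ ω, psiBar data n 0 ω ∂P))
      = ∑ k, ∑ j, qb pdist (k,1) * qb pdist (j,0)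
          * ((n : ℝ) * (Vq pdist n k j - Uq pdist n k 1 * Uq pdist n j 0)) := by
    intro n
    rw [hint1 n, hint2 n 1, hint2 n 0, Finset.sum_mul_sum]
    rw [← Finset.sum_sub_distrib, Finset.mul_sum]
    refine Finset.sum_congr rfl fun k _ => ?_
    rw [← Finset.sum_sub_distrib, Finset.mul_sum]
    refine Finset.sum_congr rfl fun j _ => ?_
    ring
  -- the limit
  have tends : Filter.Tendsto (fun n : ℕ => ∑ k, ∑ j, qb pdist (k,1) * qb pdist (j,0)
        * ((n : ℝ) * (Vq pdist n k j - Uq pdist n k 1 * Uq pdist n j 0))) Filter.atTop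
      (𝓝 (∑ k, ∑ j, qb pdist (k,1) * qb pdist (j,0)
        * ((if k = j then alphaq pdist k else 0) - alphaq pdist k * alphaq pdist j))) := by
    refine tendsto_finset_sum _ fun k _ => ?_
    refine tendsto_finset_sum _ fun j _ => ?_
    exact (keylim pdist hpc0 hpc1 hcell k j).const_mul _
  -- value of the limit
  have hval : ∑ k, ∑ j, qb pdist (k,1) * qb pdist (j,0)
        * ((if k = j then alphaq pdist k else 0) - alphaq pdist k * alphaq pdist j)
      = ∑ k, alpha P H k * psi P H Ypot k 1 * psi P H Ypot k 0
          - psiPop P H Ypot 1 * psiPop P H Ypot 0 := by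
    simp only [hq, halphaq, psiPop]
    have hterm : ∀ k j : Fin K, psi P H Ypot k 1 * psi P H Ypot j 0
          * ((if k = j then alpha P H k else 0) - alpha P H k * alpha P H j)
        = (if k = j then alpha P H k * psi P H Ypot k 1 * psi P H Ypot j 0 else 0)
          - (alpha P H k * psi P H Ypot k 1) * (alpha P H j * psi P H Ypot j 0) := by
      intro k j
      by_cases h : k = j <;> simp [h] <;> ring
    rw [Finset.sum_congr rfl fun k _ => Finset.sum_congr rfl fun j _ => hterm k j]
    rw [Finset.sum_congr rfl fun k (_ : k ∈ Finset.univ) => Finset.sum_sub_distrib _ _,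
      Finset.sum_sub_distrib]
    congr 1
    · refine Finset.sum_congr rfl fun k _ => ?_
      rw [Finset.sum_ite_eq]
      simp
    · rw [← Finset.sum_mul_sum]
  rw [← hval]
  exact tends.congr fun n => (hseq n).symm

end CausalMeta
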